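/- Combining the two directions: in the network N_k, the minimum cost of an integral flow of value k equals the minimum of w_D(E) over all subsets E ⊆ D with |E| = k. Hence min over k ∈ {1,…,|D|} of the minimum cost of N_k equals min over nonempty E ⊆ D of w_D(E), and an optimal subset of D with respect to Δ = {A→B, B→A} can be recovered from an optimal flow. -/

import Mathlib

attribute [local instance] Classical.propDecidable

open Finset

/-- Number of unordered pairs of distinct facts of `E` violating `viol`. -/
noncomputable def numVio {F : Type*} [DecidableEq F] (viol : F → F → Prop)
    (E : Finset F) : ℕ :=
  ((E.powersetCard 2).filter (fun p => ∀ f ∈ p, ∀ g ∈ p, f ≠ g → viol f g)).card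

/-- Nodes of the flow network `N_k`: source `s`, auxiliary node `sp = s'`,
sink `t`, left copies `vAi a i` and left block nodes `vA a`, right block nodes
`uB b` and right copies `uBi b i` (the index `i : Fin n` stands for `i+1`). -/
inductive FNode (α β : Type*) (n : ℕ) where
  | s | sp | t
  | vAi (a : α) (i : Fin n)
  | vA (a : α)
  | uB (b : β)
  | uBi (b : β) (i : Fin n)
  deriving DecidableEq, Fintype

variable {α β : Type*} [DecidableEq α] [DecidableEq β]

/-- `#_{D.A}(a)`, the number of facts of `D` with `A`-value `a`. -/
def cntA (D : Finset (α × β)) (a : α) : ℕ := (D.filter (fun f => f.1 = a)).card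

/-- `#_{D.B}(b)`. -/
def cntB (D : Finset (α × β)) (b : β) : ℕ := (D.filter (fun f => f.2 = b)).card

/-- Edge capacities of `N_k`: `(s,s')` has capacity `k`, all other edges capacity 1. -/
def capN (D : Finset (α × β)) (k : ℕ) :
    FNode α β D.card → FNode α β D.card → ℕ
  | .s, .sp => k
  | .sp, .vAi a i => if i.val < cntA D a then 1 else 0
  | .vAi a i, .vA a' => if a = a' ∧ i.val < cntA D a then 1 else 0
  | .vA a, .uB b => if (a, b) ∈ D then 1 else 0
  | .uB b, .uBi b' i => if b = b' ∧ i.val < cntB D b then 1 else 0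
  | .uBi b i, .t => if i.val < cntB D b then 1 else 0
  | _, _ => 0

/-- Edge costs of `N_k`: `(v_a^{i+1}, v_a)` costs `i·w₁`, `(v_a,u_b)` costs `−w f`
for the fact `f = (a,b)`, `(u_b, u_b^{i+1})` costs `i·w₂`; all other edges cost 0. -/
noncomputable def ecostN (D : Finset (α × β)) (w : α × β → ℚ) (w1 w2 : ℚ) :
    FNode α β D.card → FNode α β D.card → ℚ
  | .vAi a i, .vA a' => if a = a' then (i.val : ℚ) * w1 else 0
  | .vA a, .uB b => if (a, b) ∈ D then -w (a, b) else 0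
  | .uB b, .uBi b' i => if b = b' then (i.val : ℚ) * w2 else 0
  | _, _ => 0

/-- An integral flow on `N_k`: capacities respected and flow conserved at every
node other than the source and the sink. -/
def IsFlow [Fintype α] [Fintype β] (D : Finset (α × β)) (k : ℕ)
    (g : FNode α β D.card → FNode α β D.card → ℕ) : Prop :=
  (∀ u v, g u v ≤ capN D k u v) ∧
  (∀ v : FNode α β D.card, v ≠ FNode.s → v ≠ FNode.t →
    (∑ u, g u v) = ∑ u, g v u)

/-- The value of a flow. -/
def flowValue [Fintype α] [Fintype β] {n : ℕ}
    (g : FNode α β n → FNode α β n → ℕ) : ℕ :=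
  ∑ v, g FNode.s v

/-- The cost of a flow: `Σ_e g(e)·c(e)`. -/
noncomputable def flowCost [Fintype α] [Fintype β] (D : Finset (α × β))
    (w : α × β → ℚ) (w1 w2 : ℚ)
    (g : FNode α β D.card → FNode α β D.card → ℕ) : ℚ :=
  ∑ u, ∑ v, (g u v : ℚ) * ecostN D w w1 w2 u v

/-- `w_D(E)` for `Δ = {A→B, B→A}` with weights `w₁, w₂`. -/
noncomputable def wDAB (w : α × β → ℚ) (w1 w2 : ℚ) (E : Finset (α × β)) : ℚ :=
  (∑ f ∈ E, -(w f)) +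
    w1 * (numVio (fun f g => f.1 = g.1 ∧ f.2 ≠ g.2) E : ℚ) +
    w2 * (numVio (fun f g => f.2 = g.2 ∧ f.1 ≠ g.1) E : ℚ)

/-- The flow `f_E` induced by a subset `E ⊆ D`. -/
def fE (D E : Finset (α × β)) :
    FNode α β D.card → FNode α β D.card → ℕ
  | .s, .sp => E.card
  | .sp, .vAi a i => if i.val < cntA E a then 1 else 0
  | .vAi a i, .vA a' => if a = a' ∧ i.val < cntA E a then 1 else 0
  | .vA a, .uB b => if (a, b) ∈ E then 1 else 0
  | .uB b, .uBi b' i => if b = b' ∧ i.val < cntB E b then 1 else 0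
  | .uBi b i, .t => if i.val < cntB E b then 1 else 0
  | _, _ => 0

/-! A subset `E ⊆ D` induces the flow `fE D E` of value `|E|`: the `A`-block of `a` carries
one unit on each of its first `#_{E.A}(a)` edges, of costs `0, w₁, 2w₁, …`, hence costs
`w₁ · C(#_{E.A}(a), 2)`, which is `w₁` times the number of `A → B` violations among the facts
of `E` with `A`-value `a`; the same holds on the `B` side, so the cost of `fE D E` is `w_D(E)`.

Conversely, an integral flow `g` of value `k` saturates a set `E` of middle edges `(v_a, u_b)`
with `|E| = k`. Conservation pushes `#_{E.A}(a)` units through the `A`-block of `a`, along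
pairwise distinct unit-capacity edges, and the cheapest such choice is the first
`#_{E.A}(a)` edges; hence `g` costs at least `w_D(E)`. -/

theorem numVio_eq_sum_choose {F γ : Type*} [DecidableEq F] [Fintype γ] [DecidableEq γ]
    (key : F → γ) {viol : F → F → Prop}
    (hviol : ∀ f g, f ≠ g → (viol f g ↔ key f = key g))
    (E : Finset F) :
    numVio viol E = ∑ c, (#{f ∈ E | key f = c}).choose 2 := by
  have hpairs : {p ∈ E.powersetCard 2 | ∀ f ∈ p, ∀ g ∈ p, f ≠ g → viol f g}
      = univ.biUnion fun c => {f ∈ E | key f = c}.powersetCard 2 := by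
    ext p
    simp only [mem_filter, mem_powersetCard, mem_biUnion, mem_univ, true_and]
    constructor
    · rintro ⟨⟨hpE, hp2⟩, hvio⟩
      obtain ⟨f₀, hf₀⟩ := card_pos.mp (by omega : 0 < #p)
      refine ⟨key f₀, fun g hg => mem_filter.mpr ⟨hpE hg, ?_⟩, hp2⟩
      by_cases hg₀ : g = f₀
      · rw [hg₀]
      · exact (hviol g f₀ hg₀).mp (hvio g hg f₀ hf₀ hg₀)
    · rintro ⟨c, hpc, hp2⟩
      refine ⟨⟨hpc.trans (filter_subset _ _), hp2⟩, fun f hf g hg hfg => ?_⟩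
      exact (hviol f g hfg).mpr
        ((mem_filter.mp (hpc hf)).2.trans (mem_filter.mp (hpc hg)).2.symm)
  rw [numVio, hpairs, card_biUnion]
  · simp only [card_powersetCard]
  · intro c _ c' _ hcc'
    refine disjoint_left.mpr fun p hp hp' => ?_
    rw [mem_powersetCard] at hp hp'
    obtain ⟨f₀, hf₀⟩ := card_pos.mp (by omega : 0 < #p)
    exact hcc' ((mem_filter.mp (hp.1 hf₀)).2.symm.trans (mem_filter.mp (hp'.1 hf₀)).2)

theorem wDAB_eq_sum_choose [Fintype α] [Fintype β] (w : α × β → ℚ) (w1 w2 : ℚ)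
    (E : Finset (α × β)) :
    wDAB w w1 w2 E = (∑ f ∈ E, -w f) + w1 * ∑ a, ((cntA E a).choose 2 : ℚ)
      + w2 * ∑ b, ((cntB E b).choose 2 : ℚ) := by
  rw [wDAB, numVio_eq_sum_choose Prod.fst, numVio_eq_sum_choose Prod.snd]
  · push_cast; rfl
  · exact fun f g hfg => ⟨And.left, fun h => ⟨h, fun h' => hfg (Prod.ext h' h)⟩⟩
  · exact fun f g hfg => ⟨And.left, fun h => ⟨h, fun h' => hfg (Prod.ext h h')⟩⟩

section

omit [DecidableEq β]

theorem cntA_mono {E D : Finset (α × β)} (h : E ⊆ D) (a : α) : cntA E a ≤ cntA D a :=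
  card_le_card (filter_subset_filter _ h)

theorem cntA_le_card_of_subset {E D : Finset (α × β)} (h : E ⊆ D) (a : α) : cntA E a ≤ #D :=
  (card_filter_le _ _).trans (card_le_card h)

theorem sum_cntA [Fintype α] (E : Finset (α × β)) : ∑ a, cntA E a = #E :=
  (card_eq_sum_card_fiberwise fun f _ => mem_univ f.1).symm

end

section

omit [DecidableEq α]

theorem cntB_mono {E D : Finset (α × β)} (h : E ⊆ D) (b : β) : cntB E b ≤ cntB D b :=
  card_le_card (filter_subset_filter _ h)

theorem cntB_le_card_of_subset {E D : Finset (α × β)} (h : E ⊆ D) (b : β) : cntB E b ≤ #D :=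
  (card_filter_le _ _).trans (card_le_card h)

end

theorem card_filter_mem_eq_cntA [Fintype β] (E : Finset (α × β)) (a : α) :
    #{b | (a, b) ∈ E} = cntA E a := by
  rw [cntA]
  exact card_bij' (fun b _ => (a, b)) (fun f _ => f.2) (by simp) (by aesop) (by simp) (by aesop)

theorem card_filter_mem_eq_cntB [Fintype α] (E : Finset (α × β)) (b : β) :
    #{a | (a, b) ∈ E} = cntB E b := by
  rw [cntB]
  exact card_bij' (fun a _ => (a, b)) (fun f _ => f.1) (by simp) (by aesop) (by simp) (by aesop)

theorem choose_two_card_le_sum (s : Finset ℕ) : (#s).choose 2 ≤ ∑ i ∈ s, i := by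
  have h := sum_range_le_sum (s := s.map Nat.castEmbedding) (c := 0) (by simp)
  rw [card_map, sum_map] at h
  simp only [zero_add, Nat.castEmbedding_apply] at h
  rw [Nat.choose_two_right, ← sum_range_id]
  zify
  exact h

theorem choose_two_sum_le_sum_mul_val {n : ℕ} (x : Fin n → ℕ) (hx : ∀ i, x i ≤ 1) :
    (∑ i, x i).choose 2 ≤ ∑ i, x i * i := by
  have hx01 : ∀ i, x i = if x i = 1 then 1 else 0 := fun i => by
    have := hx i; split <;> omega
  set s : Finset (Fin n) := {i | x i = 1}
  have hcard : ∑ i, x i = #(s.map Fin.valEmbedding) := by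
    rw [card_map, card_filter]
    exact sum_congr rfl fun i _ => hx01 i
  have hsum : ∑ i, x i * i = ∑ j ∈ s.map Fin.valEmbedding, j := by
    rw [sum_map, sum_filter]
    exact sum_congr rfl fun i _ => by rw [hx01 i]; split <;> simp
  rw [hcard, hsum]
  exact choose_two_card_le_sum _

theorem mul_choose_two_sum_le {n : ℕ} (x : Fin n → ℕ) (hx : ∀ i, x i ≤ 1) {c : ℚ}
    (hc : 0 ≤ c) : c * ((∑ i, x i).choose 2 : ℚ) ≤ ∑ i, (x i : ℚ) * (i * c) := by
  calc c * ((∑ i, x i).choose 2 : ℚ)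
      ≤ c * ((∑ i, x i * i : ℕ) : ℚ) := by
        gcongr; exact_mod_cast choose_two_sum_le_sum_mul_val x hx
    _ = ∑ i, (x i : ℚ) * (i * c) := by
        push_cast; rw [mul_sum]; exact sum_congr rfl fun i _ => by ring

theorem sum_boole_lt_mul_eq_choose_two {n m : ℕ} (hm : m ≤ n) (c : ℚ) :
    ∑ i : Fin n, ((if (i : ℕ) < m then 1 else 0 : ℕ) : ℚ) * (i * c) = c * m.choose 2 := by
  rw [Fin.sum_univ_eq_sum_range (fun i => ((if i < m then 1 else 0 : ℕ) : ℚ) * (i * c)),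
    Nat.choose_two_right, ← sum_range_id]
  have hfilter : {i ∈ range n | i < m} = range m := by
    ext i; simp only [mem_filter, mem_range]; omega
  simp only [Nat.cast_ite, Nat.cast_one, Nat.cast_zero, ite_mul, one_mul, zero_mul]
  rw [← sum_filter, hfilter, ← sum_mul]
  push_cast
  ring

def fnodeEquiv {α β : Type*} {n : ℕ} :
    FNode α β n ≃ Unit ⊕ Unit ⊕ Unit ⊕ α × Fin n ⊕ α ⊕ β ⊕ β × Fin n where
  toFun
    | .s => .inl ()
    | .sp => .inr (.inl ())
    | .t => .inr (.inr (.inl ()))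
    | .vAi a i => .inr (.inr (.inr (.inl (a, i))))
    | .vA a => .inr (.inr (.inr (.inr (.inl a))))
    | .uB b => .inr (.inr (.inr (.inr (.inr (.inl b)))))
    | .uBi b i => .inr (.inr (.inr (.inr (.inr (.inr (b, i))))))
  invFun
    | .inl () => .s
    | .inr (.inl ()) => .sp
    | .inr (.inr (.inl ())) => .t
    | .inr (.inr (.inr (.inl (a, i)))) => .vAi a i
    | .inr (.inr (.inr (.inr (.inl a)))) => .vA a
    | .inr (.inr (.inr (.inr (.inr (.inl b))))) => .uB b
    | .inr (.inr (.inr (.inr (.inr (.inr (b, i)))))) => .uBi b i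
  left_inv x := by cases x <;> rfl
  right_inv x := by rcases x with _ | _ | _ | ⟨a, i⟩ | _ | _ | ⟨b, i⟩ <;> rfl

theorem sum_fnode {α β : Type*} [Fintype α] [Fintype β] {n : ℕ} {M : Type*} [AddCommMonoid M]
    (f : FNode α β n → M) :
    ∑ u, f u = f .s + f .sp + f .t + (∑ a, ∑ i, f (.vAi a i)) +
      (∑ a, f (.vA a)) + (∑ b, f (.uB b)) + (∑ b, ∑ i, f (.uBi b i)) := by
  rw [← fnodeEquiv.symm.sum_comp f]
  simp [Fintype.sum_sum_type, Fintype.sum_prod_type, fnodeEquiv, add_assoc]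

theorem flowCost_eq [Fintype α] [Fintype β] (D : Finset (α × β)) (w : α × β → ℚ)
    (w1 w2 : ℚ) (g : FNode α β D.card → FNode α β D.card → ℕ) :
    flowCost D w w1 w2 g =
      (∑ a, ∑ i, (g (.vAi a i) (.vA a) : ℚ) * (i * w1)) +
      (∑ f ∈ D, (g (.vA f.1) (.uB f.2) : ℚ) * -w f) +
      ∑ b, ∑ i, (g (.uB b) (.uBi b i) : ℚ) * (i * w2) := by
  simp only [flowCost, sum_fnode, ecostN, mul_ite, mul_zero, sum_const_zero, add_zero,
    zero_add, sum_ite_eq, mem_univ, if_true]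
  rw [← Fintype.sum_prod_type' (fun a b => if (a, b) ∈ D then _ else 0), sum_ite_mem,
    univ_inter]
  simp only [sum_ite_irrel, sum_const_zero, sum_ite_eq, mem_univ, if_true]

theorem sum_indicator_mul_of_subset {F R : Type*} [DecidableEq F] [Semiring R] {D E : Finset F}
    (hE : E ⊆ D) (φ : F → R) :
    ∑ f ∈ D, ((if f ∈ E then 1 else 0 : ℕ) : R) * φ f = ∑ f ∈ E, φ f := by
  simp only [Nat.cast_ite, Nat.cast_one, Nat.cast_zero, ite_mul, one_mul, zero_mul]
  rw [sum_ite_mem, inter_eq_right.mpr hE]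

def flowFacts (D : Finset (α × β)) (g : FNode α β D.card → FNode α β D.card → ℕ) :
    Finset (α × β) :=
  {f ∈ D | g (.vA f.1) (.uB f.2) = 1}

section Network

variable {D : Finset (α × β)} {k : ℕ}
  {g : FNode α β D.card → FNode α β D.card → ℕ}

theorem apply_eq_zero_of_capN_eq_zero (hg : g ≤ capN D k) {u v : FNode α β D.card}
    (h : capN D k u v = 0) : g u v = 0 :=
  Nat.le_zero.mp (h ▸ hg u v)

theorem capN_le_one {u : FNode α β D.card} (hu : u ≠ .s) (v : FNode α β D.card) :
    capN D k u v ≤ 1 := by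
  cases u <;> cases v <;> simp only [capN] <;> first | contradiction | omega | split_ifs <;> omega

theorem apply_le_one (hg : g ≤ capN D k) {u : FNode α β D.card} (hu : u ≠ .s)
    (v : FNode α β D.card) : g u v ≤ 1 :=
  (hg u v).trans (capN_le_one hu v)

omit [DecidableEq α] [DecidableEq β] in
theorem flowFacts_subset : flowFacts D g ⊆ D := filter_subset _ _

theorem apply_vA_uB_eq_ite (hg : g ≤ capN D k) (a : α) (b : β) :
    g (.vA a) (.uB b) = if (a, b) ∈ flowFacts D g then 1 else 0 := by
  by_cases hD : (a, b) ∈ D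
  · have := apply_le_one hg (u := .vA a) (by simp) (.uB b)
    simp only [flowFacts, mem_filter, hD, true_and]
    rcases Nat.le_one_iff_eq_zero_or_eq_one.mp this with h | h <;> simp [h]
  · simp only [flowFacts, mem_filter, hD, false_and, if_false]
    exact apply_eq_zero_of_capN_eq_zero hg (by simp [capN, hD])

variable [Fintype α] [Fintype β]

theorem sum_into_eq_of_injective {ι : Type*} [Fintype ι] (hg : g ≤ capN D k)
    (e : ι → FNode α β D.card) (he : Function.Injective e) (v : FNode α β D.card)
    (h : ∀ u ∉ Set.range e, capN D k u v = 0) : ∑ u, g u v = ∑ i, g (e i) v :=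
  (Fintype.sum_of_injective e he _ _
    (fun u hu => apply_eq_zero_of_capN_eq_zero hg (h u hu)) fun _ => rfl).symm

theorem sum_out_eq_of_injective {ι : Type*} [Fintype ι] (hg : g ≤ capN D k)
    (e : ι → FNode α β D.card) (he : Function.Injective e) (u : FNode α β D.card)
    (h : ∀ v ∉ Set.range e, capN D k u v = 0) : ∑ v, g u v = ∑ i, g u (e i) :=
  (Fintype.sum_of_injective e he _ _
    (fun v hv => apply_eq_zero_of_capN_eq_zero hg (h v hv)) fun _ => rfl).symm

theorem sum_into_eq_single (hg : g ≤ capN D k) {u₀ v : FNode α β D.card}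
    (h : ∀ u ≠ u₀, capN D k u v = 0) : ∑ u, g u v = g u₀ v :=
  Fintype.sum_eq_single u₀ fun u hu => apply_eq_zero_of_capN_eq_zero hg (h u hu)

theorem sum_out_eq_single (hg : g ≤ capN D k) {u v₀ : FNode α β D.card}
    (h : ∀ v ≠ v₀, capN D k u v = 0) : ∑ v, g u v = g u v₀ :=
  Fintype.sum_eq_single v₀ fun v hv => apply_eq_zero_of_capN_eq_zero hg (h v hv)

theorem flowValue_eq_apply_s_sp (hg : g ≤ capN D k) : flowValue g = g .s .sp :=
  sum_out_eq_single hg (by rintro (_|_|_|_|_|_|_) h <;> simp_all [capN])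

theorem sum_into_sp (hg : g ≤ capN D k) : ∑ u, g u .sp = g .s .sp :=
  sum_into_eq_single hg (by rintro (_|_|_|_|_|_|_) h <;> simp_all [capN])

theorem sum_out_sp (hg : g ≤ capN D k) : ∑ v, g .sp v = ∑ a, ∑ i, g .sp (.vAi a i) := by
  rw [sum_out_eq_of_injective hg (fun p : α × Fin D.card => .vAi p.1 p.2)
    (fun _ _ h => Prod.ext (FNode.vAi.inj h).1 (FNode.vAi.inj h).2) _
    (by rintro (_|_|_|_|_|_|_) h <;> simp_all [capN]), Fintype.sum_prod_type]

theorem sum_into_vAi (hg : g ≤ capN D k) (a : α) (i : Fin D.card) :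
    ∑ u, g u (.vAi a i) = g .sp (.vAi a i) :=
  sum_into_eq_single hg (by rintro (_|_|_|_|_|_|_) h <;> simp_all [capN])

theorem sum_out_vAi (hg : g ≤ capN D k) (a : α) (i : Fin D.card) :
    ∑ v, g (.vAi a i) v = g (.vAi a i) (.vA a) :=
  sum_out_eq_single hg (by rintro (_|_|_|_|_|_|_) h <;> simp_all [capN, eq_comm])

theorem sum_into_vA (hg : g ≤ capN D k) (a : α) :
    ∑ u, g u (.vA a) = ∑ i, g (.vAi a i) (.vA a) :=
  sum_into_eq_of_injective hg _ (fun _ _ h => (FNode.vAi.inj h).2) _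
    (by rintro (_|_|_|_|_|_|_) h <;> simp_all [capN, eq_comm])

theorem sum_out_vA (hg : g ≤ capN D k) (a : α) :
    ∑ v, g (.vA a) v = ∑ b, g (.vA a) (.uB b) :=
  sum_out_eq_of_injective hg _ (fun _ _ h => FNode.uB.inj h) _
    (by rintro (_|_|_|_|_|_|_) h <;> simp_all [capN])

theorem sum_into_uB (hg : g ≤ capN D k) (b : β) :
    ∑ u, g u (.uB b) = ∑ a, g (.vA a) (.uB b) :=
  sum_into_eq_of_injective hg _ (fun _ _ h => FNode.vA.inj h) _
    (by rintro (_|_|_|_|_|_|_) h <;> simp_all [capN])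

theorem sum_out_uB (hg : g ≤ capN D k) (b : β) :
    ∑ v, g (.uB b) v = ∑ i, g (.uB b) (.uBi b i) :=
  sum_out_eq_of_injective hg _ (fun _ _ h => (FNode.uBi.inj h).2) _
    (by rintro (_|_|_|_|_|_|_) h <;> simp_all [capN, eq_comm])

theorem sum_into_uBi (hg : g ≤ capN D k) (b : β) (i : Fin D.card) :
    ∑ u, g u (.uBi b i) = g (.uB b) (.uBi b i) :=
  sum_into_eq_single hg (by rintro (_|_|_|_|_|_|_) h <;> simp_all [capN, eq_comm])

theorem sum_out_uBi (hg : g ≤ capN D k) (b : β) (i : Fin D.card) :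
    ∑ v, g (.uBi b i) v = g (.uBi b i) .t :=
  sum_out_eq_single hg (by rintro (_|_|_|_|_|_|_) h <;> simp_all [capN])

theorem isFlow_iff :
    IsFlow D k g ↔ g ≤ capN D k ∧
      g .s .sp = ∑ a, ∑ i, g .sp (.vAi a i) ∧
      (∀ a i, g .sp (.vAi a i) = g (.vAi a i) (.vA a)) ∧
      (∀ a, ∑ i, g (.vAi a i) (.vA a) = ∑ b, g (.vA a) (.uB b)) ∧
      (∀ b, ∑ a, g (.vA a) (.uB b) = ∑ i, g (.uB b) (.uBi b i)) ∧
      (∀ b i, g (.uB b) (.uBi b i) = g (.uBi b i) .t) := by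
  refine and_congr_right fun hg => ⟨fun h => ?_, ?_⟩
  · refine ⟨?_, fun a i => ?_, fun a => ?_, fun b => ?_, fun b i => ?_⟩
    · simpa only [sum_into_sp hg, sum_out_sp hg] using h .sp (by simp) (by simp)
    · simpa only [sum_into_vAi hg, sum_out_vAi hg] using h (.vAi a i) (by simp) (by simp)
    · simpa only [sum_into_vA hg, sum_out_vA hg] using h (.vA a) (by simp) (by simp)
    · simpa only [sum_into_uB hg, sum_out_uB hg] using h (.uB b) (by simp) (by simp)
    · simpa only [sum_into_uBi hg, sum_out_uBi hg] using h (.uBi b i) (by simp) (by simp)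
  · rintro ⟨hsp, hvAi, hvA, huB, huBi⟩ (_|_|_|⟨a, i⟩|a|b|⟨b, i⟩) hs ht
    · contradiction
    · rw [sum_into_sp hg, sum_out_sp hg, hsp]
    · contradiction
    · rw [sum_into_vAi hg, sum_out_vAi hg, hvAi]
    · rw [sum_into_vA hg, sum_out_vA hg, hvA]
    · rw [sum_into_uB hg, sum_out_uB hg, huB]
    · rw [sum_into_uBi hg, sum_out_uBi hg, huBi]

theorem IsFlow.sum_vAi_vA_eq_cntA (hg : IsFlow D k g) (a : α) :
    ∑ i, g (.vAi a i) (.vA a) = cntA (flowFacts D g) a := by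
  obtain ⟨hcap, -, -, hvA, -, -⟩ := isFlow_iff.mp hg
  simp only [hvA, apply_vA_uB_eq_ite hcap, sum_boole, Nat.cast_id, card_filter_mem_eq_cntA]

theorem IsFlow.sum_uB_uBi_eq_cntB (hg : IsFlow D k g) (b : β) :
    ∑ i, g (.uB b) (.uBi b i) = cntB (flowFacts D g) b := by
  obtain ⟨hcap, -, -, -, huB, -⟩ := isFlow_iff.mp hg
  simp only [← huB, apply_vA_uB_eq_ite hcap, sum_boole, Nat.cast_id, card_filter_mem_eq_cntB]

theorem IsFlow.card_flowFacts (hg : IsFlow D k g) : #(flowFacts D g) = flowValue g := by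
  obtain ⟨hcap, hsp, hvAi, -, -, -⟩ := isFlow_iff.mp hg
  simp only [flowValue_eq_apply_s_sp hcap, hsp, hvAi, hg.sum_vAi_vA_eq_cntA, sum_cntA]

theorem IsFlow.wDAB_flowFacts_le (hg : IsFlow D k g) (w : α × β → ℚ) {w1 w2 : ℚ}
    (h1 : 0 ≤ w1) (h2 : 0 ≤ w2) : wDAB w w1 w2 (flowFacts D g) ≤ flowCost D w w1 w2 g := by
  have hcap := (isFlow_iff.mp hg).1
  have hA : w1 * ∑ a, ((cntA (flowFacts D g) a).choose 2 : ℚ)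
      ≤ ∑ a, ∑ i, (g (.vAi a i) (.vA a) : ℚ) * (i * w1) := by
    rw [mul_sum]
    gcongr with a
    rw [← hg.sum_vAi_vA_eq_cntA]
    exact mul_choose_two_sum_le _ (fun i => apply_le_one hcap (by simp) _) h1
  have hB : w2 * ∑ b, ((cntB (flowFacts D g) b).choose 2 : ℚ)
      ≤ ∑ b, ∑ i, (g (.uB b) (.uBi b i) : ℚ) * (i * w2) := by
    rw [mul_sum]
    gcongr with b
    rw [← hg.sum_uB_uBi_eq_cntB]
    exact mul_choose_two_sum_le _ (fun i => apply_le_one hcap (by simp) _) h2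
  rw [flowCost_eq, wDAB_eq_sum_choose]
  simp only [apply_vA_uB_eq_ite hcap, Prod.mk.eta, sum_indicator_mul_of_subset flowFacts_subset]
  linarith

end Network

section SubsetFlow

variable {D E : Finset (α × β)}

theorem fE_le_capN (hE : E ⊆ D) {k : ℕ} (hk : #E ≤ k) : fE D E ≤ capN D k := by
  intro u v
  have hA := cntA_mono hE
  have hB := cntB_mono hE
  cases u <;> cases v <;> simp only [fE, capN, le_refl, hk]
  all_goals split_ifs <;> grind

variable [Fintype α] [Fintype β]

theorem isFlow_fE (hE : E ⊆ D) {k : ℕ} (hk : #E ≤ k) : IsFlow D k (fE D E) := by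
  have hA a : min #D (cntA E a) = cntA E a := min_eq_right (cntA_le_card_of_subset hE a)
  have hB b : min #D (cntB E b) = cntB E b := min_eq_right (cntB_le_card_of_subset hE b)
  refine isFlow_iff.mpr ⟨fE_le_capN hE hk, ?_, fun a i => ?_, fun a => ?_, fun b => ?_,
    fun b i => ?_⟩ <;>
  simp [fE, Fin.card_filter_val_lt, hA, hB, sum_cntA, card_filter_mem_eq_cntA,
    card_filter_mem_eq_cntB]

theorem flowValue_fE : flowValue (fE D E) = #E := by
  simp [flowValue, sum_fnode, fE]

theorem flowCost_fE (hE : E ⊆ D) (w : α × β → ℚ) (w1 w2 : ℚ) :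
    flowCost D w w1 w2 (fE D E) = wDAB w w1 w2 E := by
  rw [flowCost_eq, wDAB_eq_sum_choose]
  have hA a := sum_boole_lt_mul_eq_choose_two (cntA_le_card_of_subset hE a) w1
  have hB b := sum_boole_lt_mul_eq_choose_two (cntB_le_card_of_subset hE b) w2
  simp only [fE, true_and, hA, hB, sum_indicator_mul_of_subset hE, mul_sum]
  ring

end SubsetFlow

theorem min_flow_cost_eq_min_wD_general [Fintype α] [Fintype β]
    (D : Finset (α × β)) (w : α × β → ℚ) (w1 w2 : ℚ)
    (h1 : 0 ≤ w1) (h2 : 0 ≤ w2)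
    (k : ℕ) :
    (∀ g, IsFlow D k g → flowValue g = k →
      ∃ E ⊆ D, E.card = k ∧ wDAB w w1 w2 E ≤ flowCost D w w1 w2 g) ∧
    (∀ E ⊆ D, E.card = k →
      ∃ g, IsFlow D k g ∧ flowValue g = k ∧
        flowCost D w w1 w2 g ≤ wDAB w w1 w2 E) :=
  ⟨fun g hg hval => ⟨flowFacts D g, flowFacts_subset, hval ▸ hg.card_flowFacts,
      hg.wDAB_flowFacts_le w h1 h2⟩,
    fun E hE hEk => ⟨fE D E, isFlow_fE hE hEk.le, hEk ▸ flowValue_fE,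
      (flowCost_fE hE w w1 w2).le⟩⟩

/-- Combining both directions: for every `k` with `1 ≤ k ≤ |D|`, the minimum cost
of an integral flow of value `k` in `N_k` equals the minimum of `w_D(E)` over all
subsets `E ⊆ D` with `|E| = k` (expressed by mutual domination of the two minima).
Consequently, minimizing over all `k` recovers an optimal subset of `D`
w.r.t. `Δ = {A→B, B→A}`. -/
theorem min_flow_cost_eq_min_wD [Fintype α] [Fintype β]
    (D : Finset (α × β)) (w : α × β → ℚ) (w1 w2 : ℚ)
    (hw : ∀ f ∈ D, 0 ≤ w f) (h1 : 0 ≤ w1) (h2 : 0 ≤ w2)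
    (k : ℕ) (hk1 : 1 ≤ k) (hk2 : k ≤ D.card) :
    (∀ g, IsFlow D k g → flowValue g = k →
      ∃ E ⊆ D, E.card = k ∧ wDAB w w1 w2 E ≤ flowCost D w w1 w2 g) ∧
    (∀ E ⊆ D, E.card = k →
      ∃ g, IsFlow D k g ∧ flowValue g = k ∧
        flowCost D w w1 w2 g ≤ wDAB w w1 w2 E) :=
  min_flow_cost_eq_min_wD_general D w w1 w2 h1 h2 k
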